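/- Singular Grönwall inequality: Let θ ∈ [0,1/2), C ≥ 0, and let u, h : [s,T] → [0,∞) be measurable and bounded with u(t) ≤ h(t) + C ∫_s^t (t-τ)^{-2θ} u(τ) dτ for all t ∈ [s,T]. Then there exists a constant M depending only on C, θ, T-s such that u(t) ≤ h(t) + M ∫_s^t (t-τ)^{-2θ} h(τ) dτ for all t ∈ [s,T], provided h is nondecreasing or, in general, u(t) ≤ M' sup_{τ∈[s,t]} h(τ) for a constant M' depending only on C, θ, T-s. -/

import Mathlib

/-!
Weighting `u` by `exp (-ρ (τ - s))` turns the singular kernel into `(t - τ)^q exp (-ρ (t - τ))`,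
whose integral is at most `Γ(q + 1) ρ^{-(q + 1)}` (a Gamma integral), small for large `ρ`.
Choosing `ρ` with `C Γ(q + 1) ρ^{-(q + 1)} ≤ 1/2`, the supremum `V` of the weighted `u` on `[s, t]`
satisfies `V ≤ sup h + V / 2`, hence `u t ≤ 2 exp (ρ (t - s)) sup h` (a Bielecki-norm argument).
-/

open MeasureTheory Set Real Filter Topology

lemma le_two_mul_of_forall_le_add_half_sSup {α : Type*} {S : Set α} {f : α → ℝ} {a : ℝ}
    (hbdd : BddAbove (f '' S)) (h : ∀ x ∈ S, f x ≤ a + sSup (f '' S) / 2) {x : α} (hx : x ∈ S) :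
    f x ≤ 2 * a := by
  have hsup : sSup (f '' S) ≤ a + sSup (f '' S) / 2 :=
    csSup_le ((nonempty_of_mem hx).image f) (forall_mem_image.2 h)
  linarith [le_csSup hbdd (mem_image_of_mem f hx)]

lemma exists_pos_mul_rpow_neg_le (K : ℝ) {a ε : ℝ} (ha : 0 < a) (hε : 0 < ε) :
    ∃ ρ > 0, K * ρ ^ (-a) ≤ ε := by
  have hlim : Tendsto (fun ρ : ℝ => K * ρ ^ (-a)) atTop (𝓝 0) := by
    simpa using (tendsto_rpow_neg_atTop ha).const_mul K
  exact ((eventually_gt_atTop 0).and (hlim.eventually (ge_mem_nhds hε))).exists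

section SingularKernel

variable {q ρ : ℝ}

lemma integrableOn_rpow_mul_exp_neg_mul_Ioi (hq : -1 < q) (hρ : 0 < ρ) :
    IntegrableOn (fun r : ℝ => r ^ q * exp (-(ρ * r))) (Ioi 0) := by
  simpa [rpow_one] using integrableOn_rpow_mul_exp_neg_mul_rpow hq one_pos hρ

lemma setIntegral_Ioo_comp_sub_left (f : ℝ → ℝ) {a c : ℝ} (hac : a ≤ c) :
    ∫ τ in Ioo a c, f (c - τ) = ∫ r in Ioc 0 (c - a), f r := by
  rw [← integral_Ioc_eq_integral_Ioo, ← intervalIntegral.integral_of_le hac,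
    intervalIntegral.integral_comp_sub_left, sub_self,
    intervalIntegral.integral_of_le (sub_nonneg.2 hac)]

lemma integrableOn_Ioo_comp_sub_left {f : ℝ → ℝ} (hf : IntegrableOn f (Ioi 0)) {a c : ℝ}
    (hac : a ≤ c) : IntegrableOn (fun τ => f (c - τ)) (Ioo a c) := by
  have h := ((intervalIntegrable_iff_integrableOn_Ioc_of_le (sub_nonneg.2 hac)).2
    (hf.mono_set Ioc_subset_Ioi_self)).comp_sub_left c
  rw [sub_zero, sub_sub_cancel] at h
  exact ((intervalIntegrable_iff_integrableOn_Ioc_of_le hac).mp h.symm).mono_set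
    Ioo_subset_Ioc_self

lemma setIntegral_sub_rpow_mul_exp_le (hq : -1 < q) (hρ : 0 < ρ) {a c : ℝ} (hac : a ≤ c) :
    ∫ τ in Ioo a c, (c - τ) ^ q * exp (-(ρ * (c - τ))) ≤ Gamma (q + 1) * ρ ^ (-(q + 1)) := by
  rw [setIntegral_Ioo_comp_sub_left (fun r => r ^ q * exp (-(ρ * r))) hac]
  calc ∫ r in Ioc 0 (c - a), r ^ q * exp (-(ρ * r))
      ≤ ∫ r in Ioi 0, r ^ q * exp (-(ρ * r)) :=
        setIntegral_mono_set (integrableOn_rpow_mul_exp_neg_mul_Ioi hq hρ)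
          ((ae_restrict_iff' measurableSet_Ioi).2 (ae_of_all _ fun r hr =>
            mul_nonneg (rpow_nonneg (le_of_lt hr) q) (exp_pos _).le))
          Ioc_subset_Ioi_self.eventuallyLE
    _ = Gamma (q + 1) * ρ ^ (-(q + 1)) := by
      have := integral_rpow_mul_exp_neg_mul_Ioi (a := q + 1) (by linarith) hρ
      rw [add_sub_cancel_right] at this
      rw [this, mul_comm, one_div, inv_rpow hρ.le, rpow_neg hρ.le]

lemma integrableOn_sub_rpow_mul_exp (hq : -1 < q) (hρ : 0 < ρ) {a c : ℝ} (hac : a ≤ c) :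
    IntegrableOn (fun τ => (c - τ) ^ q * exp (-(ρ * (c - τ)))) (Ioo a c) :=
  integrableOn_Ioo_comp_sub_left (integrableOn_rpow_mul_exp_neg_mul_Ioi hq hρ) hac

lemma setIntegral_sub_rpow_mul_le_of_le_exp {a c V : ℝ} {u : ℝ → ℝ} (hq : -1 < q)
    (hρ : 0 < ρ) (hac : a ≤ c) (hV : 0 ≤ V) (hu0 : ∀ τ ∈ Ioo a c, 0 ≤ u τ)
    (hu : ∀ τ ∈ Ioo a c, u τ ≤ V * exp (ρ * (τ - a))) :
    ∫ τ in Ioo a c, (c - τ) ^ q * u τ ≤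
      V * exp (ρ * (c - a)) * (Gamma (q + 1) * ρ ^ (-(q + 1))) := by
  have hweight : ∀ τ, exp (ρ * (τ - a)) = exp (ρ * (c - a)) * exp (-(ρ * (c - τ))) := fun τ => by
    rw [← exp_add]; ring_nf
  calc ∫ τ in Ioo a c, (c - τ) ^ q * u τ
      ≤ ∫ τ in Ioo a c, V * exp (ρ * (c - a)) * ((c - τ) ^ q * exp (-(ρ * (c - τ)))) := by
        refine integral_mono_of_nonneg ?_ ((integrableOn_sub_rpow_mul_exp hq hρ hac).const_mul _) ?_
          <;> refine (ae_restrict_iff' measurableSet_Ioo).2 (ae_of_all _ fun τ hτ => ?_)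
        · exact mul_nonneg (rpow_nonneg (sub_nonneg.2 hτ.2.le) q) (hu0 τ hτ)
        · calc (c - τ) ^ q * u τ ≤ (c - τ) ^ q * (V * exp (ρ * (τ - a))) :=
                mul_le_mul_of_nonneg_left (hu τ hτ) (rpow_nonneg (sub_nonneg.2 hτ.2.le) q)
            _ = _ := by rw [hweight]; ring
    _ = V * exp (ρ * (c - a)) * ∫ τ in Ioo a c, (c - τ) ^ q * exp (-(ρ * (c - τ))) :=
        integral_const_mul _ _
    _ ≤ V * exp (ρ * (c - a)) * (Gamma (q + 1) * ρ ^ (-(q + 1))) := by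
        gcongr
        exact setIntegral_sub_rpow_mul_exp_le hq hρ hac

end SingularKernel

theorem le_two_mul_exp_mul_sSup_of_le_add_integral {q C ρ s t : ℝ} {u h : ℝ → ℝ}
    (hq : -1 < q) (hC : 0 ≤ C) (hρ : 0 < ρ) (hρC : C * Gamma (q + 1) * ρ ^ (-(q + 1)) ≤ 1 / 2)
    (hu0 : ∀ τ, 0 ≤ u τ) (hubdd : BddAbove (u '' Icc s t)) (hhbdd : BddAbove (h '' Icc s t))
    (hst : s ≤ t)
    (hyp : ∀ t' ∈ Icc s t, u t' ≤ h t' + C * ∫ τ in Ioo s t', (t' - τ) ^ q * u τ) :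
    u t ≤ 2 * exp (ρ * (t - s)) * sSup (h '' Icc s t) := by
  set w : ℝ → ℝ := fun τ => u τ * exp (-(ρ * (τ - s))) with hw_def
  set V := sSup (w '' Icc s t)
  set H := sSup (h '' Icc s t)
  have hs : s ∈ Icc s t := left_mem_Icc.2 hst
  have hhH : ∀ τ ∈ Icc s t, h τ ≤ H := fun τ hτ => le_csSup hhbdd (mem_image_of_mem h hτ)
  have hdecay : ∀ τ ∈ Icc s t, exp (-(ρ * (τ - s))) ≤ 1 := fun τ hτ =>
    exp_le_one_iff.2 (neg_nonpos.2 (mul_nonneg hρ.le (sub_nonneg.2 hτ.1)))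
  have hwbdd : BddAbove (w '' Icc s t) := by
    obtain ⟨U, hU⟩ := hubdd
    refine ⟨U, forall_mem_image.2 fun τ hτ => ?_⟩
    exact (mul_le_of_le_one_right (hu0 τ) (hdecay τ hτ)).trans (hU (mem_image_of_mem u hτ))
  have hwV : ∀ τ ∈ Icc s t, w τ ≤ V := fun τ hτ => le_csSup hwbdd (mem_image_of_mem w hτ)
  have hV0 : 0 ≤ V := (mul_nonneg (hu0 s) (exp_pos _).le).trans (hwV s hs)
  have hu_eq : ∀ τ, u τ = w τ * exp (ρ * (τ - s)) := fun τ => by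
    rw [hw_def, mul_assoc, ← exp_add, neg_add_cancel, exp_zero, mul_one]
  -- at `t' = s` the integral vanishes, so `0 ≤ u s ≤ h s ≤ H`
  have hH0 : 0 ≤ H := by
    have hus := hyp s hs
    rw [Ioo_self, Measure.restrict_empty, integral_zero_measure, mul_zero, add_zero] at hus
    exact (hu0 s).trans (hus.trans (hhH s hs))
  have hw_le : ∀ t' ∈ Icc s t, w t' ≤ H + V / 2 := by
    intro t' ht'
    have hint := setIntegral_sub_rpow_mul_le_of_le_exp (u := u) hq hρ ht'.1 hV0
      (fun τ _ => hu0 τ) fun τ hτ => by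
        rw [hu_eq τ]
        exact mul_le_mul_of_nonneg_right (hwV τ ⟨hτ.1.le, hτ.2.le.trans ht'.2⟩) (exp_pos _).le
    have hut' : u t' ≤ H + V / 2 * exp (ρ * (t' - s)) :=
      calc u t' ≤ h t' + C * ∫ τ in Ioo s t', (t' - τ) ^ q * u τ := hyp t' ht'
        _ ≤ H + C * (V * exp (ρ * (t' - s)) * (Gamma (q + 1) * ρ ^ (-(q + 1)))) :=
          add_le_add (hhH t' ht') (mul_le_mul_of_nonneg_left hint hC)
        _ = H + C * Gamma (q + 1) * ρ ^ (-(q + 1)) * (V * exp (ρ * (t' - s))) := by ring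
        _ ≤ H + 1 / 2 * (V * exp (ρ * (t' - s))) := by gcongr
        _ = H + V / 2 * exp (ρ * (t' - s)) := by ring
    calc w t' = u t' * exp (-(ρ * (t' - s))) := rfl
      _ ≤ (H + V / 2 * exp (ρ * (t' - s))) * exp (-(ρ * (t' - s))) := by gcongr
      _ = H * exp (-(ρ * (t' - s))) + V / 2 := by
        rw [add_mul, mul_assoc, ← exp_add, add_neg_cancel, exp_zero, mul_one]
      _ ≤ H + V / 2 := by gcongr; exact mul_le_of_le_one_right hH0 (hdecay t' ht')
  calc u t = w t * exp (ρ * (t - s)) := hu_eq t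
    _ ≤ 2 * H * exp (ρ * (t - s)) := by
      gcongr
      exact le_two_mul_of_forall_le_add_half_sSup hwbdd hw_le (right_mem_Icc.2 hst)
    _ = 2 * exp (ρ * (t - s)) * H := by ring

theorem stmt_2_general (θ C s T : ℝ) (hθ : θ < 1/2) (hC : 0 ≤ C) :
    ∃ M' : ℝ, 0 < M' ∧
      ∀ u h : ℝ → ℝ, Measurable u → Measurable h →
        (∀ t, 0 ≤ u t) → (∀ t, 0 ≤ h t) →
        BddAbove (u '' Icc s T) → BddAbove (h '' Icc s T) →
        (∀ t ∈ Icc s T,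
          u t ≤ h t + C * ∫ τ in Ioo s t, (t - τ) ^ (-(2*θ)) * u τ) →
        ∀ t ∈ Icc s T, u t ≤ M' * sSup (h '' Icc s t) := by
  have hq : -1 < -(2 * θ) := by linarith
  obtain ⟨ρ, hρ, hρC⟩ := exists_pos_mul_rpow_neg_le (C * Gamma (-(2 * θ) + 1))
    (by linarith : 0 < -(2 * θ) + 1) one_half_pos
  refine ⟨2 * exp (ρ * (T - s)), by positivity, ?_⟩
  intro u h _ _ hu0 hh0 hubdd hhbdd hyp t ⟨hst, htT⟩
  have hsub : Icc s t ⊆ Icc s T := Icc_subset_Icc_right htT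
  calc u t ≤ 2 * exp (ρ * (t - s)) * sSup (h '' Icc s t) :=
        le_two_mul_exp_mul_sSup_of_le_add_integral hq hC hρ hρC hu0
          (hubdd.mono (image_mono hsub)) (hhbdd.mono (image_mono hsub)) hst
          fun t' ht' => hyp t' (hsub ht')
    _ ≤ 2 * exp (ρ * (T - s)) * sSup (h '' Icc s t) := by
        gcongr
        exact Real.sSup_nonneg (forall_mem_image.2 fun τ _ => hh0 τ)

/-- Singular Grönwall inequality (Henry, Lemma 7.1.1): if
`u(t) ≤ h(t) + C ∫_s^t (t-τ)^{-2θ} u(τ) dτ` on `[s,T]` with `θ ∈ [0,1/2)`, `C ≥ 0`,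
and `u, h` measurable, bounded and nonnegative, then there is a constant `M'`
depending only on `C, θ, T-s` with `u(t) ≤ M' · sup_{τ∈[s,t]} h(τ)` on `[s,T]`. -/
theorem stmt_2 (θ C s T : ℝ) (hθ0 : 0 ≤ θ) (hθ : θ < 1/2) (hC : 0 ≤ C) (hsT : s ≤ T) :
    ∃ M' : ℝ, 0 < M' ∧
      ∀ u h : ℝ → ℝ, Measurable u → Measurable h →
        (∀ t, 0 ≤ u t) → (∀ t, 0 ≤ h t) →
        BddAbove (u '' Icc s T) → BddAbove (h '' Icc s T) →
        (∀ t ∈ Icc s T,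
          u t ≤ h t + C * ∫ τ in Ioo s t, (t - τ) ^ (-(2*θ)) * u τ) →
        ∀ t ∈ Icc s T, u t ≤ M' * sSup (h '' Icc s t) :=
  stmt_2_general θ C s T hθ hC
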